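/- arXiv:0808.1320 — 2 statements merged into one kernel-verified Lean document; each statement's English description precedes it below -/
import Mathlib

section
/- Any multiset {X_1,...,X_n} of nonnegative integers can be converted into a balanced multiset {Y_1,...,Y_n} with the same total sum by finitely many moves, each of which replaces a pair {X_i, X_j} with {⌊(X_i+X_j)/2⌋, ⌈(X_i+X_j)/2⌉}. -/
/-- A multiset of nonnegative integers is *balanced* if any two of its
elements differ by at most 1. -/
def MultisetBalanced (S : Multiset ℕ) : Prop :=
  ∀ a ∈ S, ∀ b ∈ S, a ≤ b + 1

/-- One balancing move: replace two elements `a`, `b` by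
`⌊(a+b)/2⌋` and `⌈(a+b)/2⌉`. -/
def BalMove (S T : Multiset ℕ) : Prop :=
  ∃ a b S', S = a ::ₘ b ::ₘ S' ∧ T = ((a + b) / 2) ::ₘ ((a + b + 1) / 2) ::ₘ S'

/-!
Each move applied to a pair `a ≥ b + 2` strictly decreases the sum of squares while keeping the
cardinality and the sum, so repeatedly applying moves to such pairs must stop, and it can only
stop at a balanced multiset.
-/

lemma Relation.ReflTransGen.apply_eq {α β : Type*} {r : α → α → Prop} {a b : α} {f : α → β}
    (hf : ∀ x y, r x y → f x = f y) (h : Relation.ReflTransGen r a b) : f a = f b := by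
  simpa [Relation.reflTransGen_eq_self] using h.lift f hf

lemma BalMove.card_eq {S T : Multiset ℕ} (h : BalMove S T) :
    Multiset.card S = Multiset.card T := by
  obtain ⟨a, b, S', rfl, rfl⟩ := h
  simp

lemma BalMove.sum_eq {S T : Multiset ℕ} (h : BalMove S T) : S.sum = T.sum := by
  obtain ⟨a, b, S', rfl, rfl⟩ := h
  simp only [Multiset.sum_cons]
  omega

def sqSum (S : Multiset ℕ) : ℕ :=
  (S.map (· ^ 2)).sum

-- `a² + b² - p² - q² = 2 (a - p) (a - q)` when `p + q = a + b`.
lemma sq_add_sq_lt_of_add_eq {a b p q : ℕ} (h : p + q = a + b) (hp : p < a) (hq : q < a) :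
    p ^ 2 + q ^ 2 < a ^ 2 + b ^ 2 := by
  nlinarith

lemma exists_balMove_sqSum_lt {S : Multiset ℕ} (hS : ¬ MultisetBalanced S) :
    ∃ T, BalMove S T ∧ sqSum T < sqSum S := by
  simp only [MultisetBalanced, not_forall, not_le] at hS
  obtain ⟨a, ha, b, hb, hab⟩ := hS
  have hb' : b ∈ S.erase a := (Multiset.mem_erase_of_ne (by omega)).2 hb
  obtain ⟨S', rfl⟩ : ∃ S', S = a ::ₘ b ::ₘ S' :=
    ⟨(S.erase a).erase b, by rw [Multiset.cons_erase hb', Multiset.cons_erase ha]⟩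
  refine ⟨_, ⟨a, b, S', rfl, rfl⟩, ?_⟩
  have := sq_add_sq_lt_of_add_eq (a := a) (b := b) (p := (a + b) / 2) (q := (a + b + 1) / 2)
    (by omega) (by omega) (by omega)
  simp only [sqSum, Multiset.map_cons, Multiset.sum_cons]
  omega

theorem exists_reflTransGen_balMove_balanced (S : Multiset ℕ) :
    ∃ T, Relation.ReflTransGen BalMove S T ∧ MultisetBalanced T := by
  by_cases hS : MultisetBalanced S
  · exact ⟨S, .refl, hS⟩
  obtain ⟨T, hST, hlt⟩ := exists_balMove_sqSum_lt hS
  obtain ⟨U, hTU, hU⟩ := exists_reflTransGen_balMove_balanced T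
  exact ⟨U, .head hST hTU, hU⟩
termination_by sqSum S

/-- Any multiset of nonnegative integers can be converted into a balanced
multiset of the same cardinality and sum by finitely many balancing moves. -/
theorem exists_balanced_of_moves (S : Multiset ℕ) :
    ∃ T : Multiset ℕ, Relation.ReflTransGen BalMove S T ∧
      Multiset.card T = Multiset.card S ∧ T.sum = S.sum ∧ MultisetBalanced T := by
  obtain ⟨T, hST, hT⟩ := exists_reflTransGen_balMove_balanced S
  exact ⟨T, hST, (hST.apply_eq fun _ _ h => h.card_eq).symm,
    (hST.apply_eq fun _ _ h => h.sum_eq).symm, hT⟩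
end

section
/- If a multiset S of nonnegative integers is not balanced (its maximum and minimum differ by at least 2), then replacing a pair consisting of a maximum element and a minimum element by their floored and ceiled averages strictly decreases the difference between the maximum and minimum, or keeps it the same while the process terminates in finitely many steps; in particular, the difference max(S) - min(S) can be reduced to at most 1 by finitely many such moves. -/
lemma sq_add_sq_lt_of_add_eq_s2 {a b c d : ℕ} (h : c + d = a + b) (hc : a < c) (hd : a < d) :
    c ^ 2 + d ^ 2 < a ^ 2 + b ^ 2 := by
  obtain ⟨x, rfl⟩ := Nat.exists_eq_add_of_lt hc
  obtain ⟨y, rfl⟩ := Nat.exists_eq_add_of_lt hd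
  obtain rfl : b = a + x + y + 2 := by omega
  nlinarith

lemma exists_balMove_sum_sq_lt {S : Multiset ℕ} {a b : ℕ} (ha : a ∈ S) (hb : b ∈ S)
    (hab : a + 2 ≤ b) :
    ∃ T, BalMove S T ∧ (T.map (· ^ 2)).sum < (S.map (· ^ 2)).sum := by
  have hb' : b ∈ S.erase a := (Multiset.mem_erase_of_ne (by omega)).mpr hb
  obtain ⟨S', rfl⟩ : ∃ S', S = a ::ₘ b ::ₘ S' :=
    ⟨_, by rw [Multiset.cons_erase hb', Multiset.cons_erase ha]⟩
  refine ⟨_, ⟨a, b, S', rfl, rfl⟩, ?_⟩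
  simp only [Multiset.map_cons, Multiset.sum_cons]
  have : ((a + b) / 2) ^ 2 + ((a + b + 1) / 2) ^ 2 < a ^ 2 + b ^ 2 :=
    sq_add_sq_lt_of_add_eq_s2 (by omega) (by omega) (by omega)
  omega

lemma exists_forall_mem_le_le_add_one {S : Multiset ℕ} (h : ∀ a ∈ S, ∀ b ∈ S, b < a + 2) :
    ∃ m : ℕ, ∀ a ∈ S, m ≤ a ∧ a ≤ m + 1 := by
  refine ⟨S.sup - 1, fun a ha => ⟨?_, ?_⟩⟩
  · have : S.sup ≤ a + 1 := Multiset.sup_le.mpr fun b hb => Nat.le_of_lt_succ (h a ha b hb)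
    omega
  · have : a ≤ S.sup := Multiset.le_sup ha
    omega

theorem moves_reduce_spread_general (S : Multiset ℕ) :
    ∃ T : Multiset ℕ, Relation.ReflTransGen BalMove S T ∧
      ∃ m : ℕ, ∀ a ∈ T, m ≤ a ∧ a ≤ m + 1 := by
  induction hn : (S.map (· ^ 2)).sum using Nat.strong_induction_on generalizing S with
  | _ n ih =>
  by_cases hspread : ∃ a ∈ S, ∃ b ∈ S, a + 2 ≤ b
  · obtain ⟨a, ha, b, hb, hab⟩ := hspread
    obtain ⟨T, hST, hlt⟩ := exists_balMove_sum_sq_lt ha hb hab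
    obtain ⟨U, hTU, hU⟩ := ih _ (hn ▸ hlt) T rfl
    exact ⟨U, .head hST hTU, hU⟩
  · push Not at hspread
    exact ⟨S, .refl, exists_forall_mem_le_le_add_one hspread⟩

/-- For a finite nonempty multiset `S` of nonnegative integers, finitely many
balancing moves reduce the difference between maximum and minimum to at most
`1`: there is a multiset `T` reachable from `S` by moves all of whose elements
lie in some interval `[m, m+1]`. -/
theorem moves_reduce_spread (S : Multiset ℕ) (hS : S ≠ 0) :
    ∃ T : Multiset ℕ, Relation.ReflTransGen BalMove S T ∧
      ∃ m : ℕ, ∀ a ∈ T, m ≤ a ∧ a ≤ m + 1 :=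
  moves_reduce_spread_general S
end
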